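/- For every real r ≥ 1 there is a constant C(r) such that Σ_{d ≤ x} ρ(d) ≤ C(r) (log x)^r for all x ≥ 2, where ρ is the multiplicative function with ρ(p^α) = (σ(p^α)/p^α)^r − (σ(p^{α−1})/p^{α−1})^r. -/

import Mathlib

open ArithmeticFunction
open scoped ArithmeticFunction.Moebius ArithmeticFunction.sigma

/-- `ρ(d) = ∑_{e ∣ d} μ(d/e) (σ(e)/e)^r`, the multiplicative function with
`ρ(p^α) = (σ(p^α)/p^α)^r − (σ(p^{α−1})/p^{α−1})^r`. -/
noncomputable def rho (r : ℝ) (d : ℕ) : ℝ :=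
  ∑ e ∈ d.divisors, (μ (d / e) : ℝ) * ((σ 1 e : ℝ) / e) ^ r

/-!
`ρ = μ * g` is the Möbius transform of the multiplicative function `g(n) = (σ(n)/n)^r`. On powers
of a prime `p` its partial sums telescope to `g(p^k) = (1 + 1/p + ⋯ + 1/p^k)^r`, which increases
with `k` (so `ρ ≥ 0`) and stays below `(1 - 1/p)^{-r} ≤ exp (r/(p-1))`. Hence `∑_{d ≤ x} ρ(d)` is
at most the Euler product `∏_{p ≤ x} exp (r/(p-1))`, and Mertens' bound
`∑_{p ≤ x} 1/(p-1) ≤ log log x + O(1)` turns it into `O((log x)^r)`. Mertens' bound follows by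
partial summation from `∑_{p ≤ N} log p / p ≤ log N + log 4`, which compares
`∑_{n ≤ N} Λ(n) ⌊N/n⌋ = log N!` with Chebyshev's `θ(N) ≤ N log 4`.
-/

open Finset Real

theorem sum_primesLE_log_mul_div_le (N : ℕ) :
    ∑ p ∈ N.primesLE, Real.log p * (N / p : ℕ) ≤ N * Real.log N := calc
  ∑ p ∈ N.primesLE, Real.log p * (N / p : ℕ) = ∑ p ∈ N.primesLE, Λ p * (N / p : ℕ) :=
      sum_congr rfl fun p hp => by rw [vonMangoldt_apply_prime (Nat.prime_of_mem_primesLE hp)]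
  _ ≤ ∑ n ∈ Ioc 0 N, Λ n * (N / n : ℕ) := by
      refine sum_le_sum_of_subset_of_nonneg ?_ fun n _ _ => by positivity
      rw [Nat.primesLE_eq_filter_Ioc_zero]
      exact filter_subset _ _
  _ = ∑ n ∈ Ioc 0 N, Real.log n := by rw [← sum_Ioc_mul_zeta_eq_sum, vonMangoldt_mul_zeta]; rfl
  _ ≤ ∑ n ∈ Ioc 0 N, Real.log N := sum_le_sum fun n hn => by
      obtain ⟨hn0, hnN⟩ := mem_Ioc.1 hn
      exact log_le_log (by exact_mod_cast hn0) (by exact_mod_cast hnN)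
  _ = N * Real.log N := by simp

theorem sum_primesLE_log_div_le (N : ℕ) :
    ∑ p ∈ N.primesLE, Real.log p / p ≤ Real.log N + Real.log 4 := by
  rcases N.eq_zero_or_pos with rfl | hN
  · simpa [Nat.primesLE_zero] using Real.log_nonneg (by norm_num : (1 : ℝ) ≤ 4)
  have hdiv : ∀ p : ℕ, (N : ℝ) / p ≤ (N / p : ℕ) + 1 := fun p => by
    rw [← Nat.floor_div_eq_div (K := ℝ)]
    exact (Nat.lt_floor_add_one _).le
  refine le_of_mul_le_mul_left ?_ (show (0 : ℝ) < N by exact_mod_cast hN)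
  calc (N : ℝ) * ∑ p ∈ N.primesLE, Real.log p / p = ∑ p ∈ N.primesLE, Real.log p * (N / p) := by
        rw [mul_sum]; exact sum_congr rfl fun p _ => by ring
    _ ≤ ∑ p ∈ N.primesLE, Real.log p * ((N / p : ℕ) + 1) :=
        sum_le_sum fun p _ => mul_le_mul_of_nonneg_left (hdiv p) (Real.log_natCast_nonneg p)
    _ = ∑ p ∈ N.primesLE, Real.log p * (N / p : ℕ) + Chebyshev.theta N := by
        rw [Chebyshev.theta_eq_sum_primesLE_log, ← sum_add_distrib]
        exact sum_congr rfl fun p _ => by ring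
    _ ≤ N * Real.log N + Real.log 4 * N :=
        add_le_add (sum_primesLE_log_mul_div_le N) (Chebyshev.theta_le_log4_mul_x N.cast_nonneg)
    _ = N * (Real.log N + Real.log 4) := by ring

-- Partial summation against `1 / log n`, in the form that survives induction on `N`.
theorem sum_Icc_div_log_sub_le {w : ℕ → ℝ} {c : ℝ}
    (hw : ∀ N, 2 ≤ N → ∑ n ∈ Icc 2 N, w n ≤ Real.log N + c) {N : ℕ} (hN : 2 ≤ N) :
    ∑ n ∈ Icc 2 N, w n / Real.log n - (∑ n ∈ Icc 2 N, w n - c) / Real.log N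
      ≤ Real.log (Real.log N) + c / Real.log 2 - Real.log (Real.log 2) := by
  induction N, hN using Nat.le_induction with
  | base =>
    simp only [Icc_self, sum_singleton, Nat.cast_ofNat]
    exact le_of_eq (by ring)
  | succ N hN ih =>
    have ha : 0 < Real.log N := Real.log_pos (by exact_mod_cast hN)
    have hab : Real.log N ≤ Real.log (N + 1 : ℕ) := log_le_log (by positivity) (by simp)
    have hb : 0 < Real.log (N + 1 : ℕ) := ha.trans_le hab
    set a := Real.log N
    set b := Real.log (N + 1 : ℕ)
    set A := ∑ n ∈ Icc 2 N, w n
    have hgrowth : (A - c) * (a⁻¹ - b⁻¹) ≤ Real.log b - Real.log a := calc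
      (A - c) * (a⁻¹ - b⁻¹) ≤ a * (a⁻¹ - b⁻¹) :=
          mul_le_mul_of_nonneg_right (by linarith [hw N hN]) (sub_nonneg.2 (inv_anti₀ ha hab))
      _ = 1 - (b / a)⁻¹ := by field_simp
      _ ≤ Real.log (b / a) := one_sub_inv_le_log_of_pos (div_pos hb ha)
      _ = Real.log b - Real.log a := log_div hb.ne' ha.ne'
    rw [sum_Icc_succ_top (by omega), sum_Icc_succ_top (by omega)]
    have hsplit : ∑ n ∈ Icc 2 N, w n / Real.log n + w (N + 1) / b - (A + w (N + 1) - c) / b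
        = (∑ n ∈ Icc 2 N, w n / Real.log n - (A - c) / a) + (A - c) * (a⁻¹ - b⁻¹) := by
      field_simp; ring
    rw [hsplit]
    linarith

theorem sum_Icc_div_log_le {w : ℕ → ℝ} {c : ℝ}
    (hw : ∀ N, 2 ≤ N → ∑ n ∈ Icc 2 N, w n ≤ Real.log N + c) {N : ℕ} (hN : 2 ≤ N) :
    ∑ n ∈ Icc 2 N, w n / Real.log n
      ≤ Real.log (Real.log N) + c / Real.log 2 - Real.log (Real.log 2) + 1 := by
  have hlog : 0 < Real.log N := Real.log_pos (by exact_mod_cast hN)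
  have : (∑ n ∈ Icc 2 N, w n - c) / Real.log N ≤ 1 :=
    div_le_one_of_le₀ (by linarith [hw N hN]) hlog.le
  linarith [sum_Icc_div_log_sub_le hw hN]

theorem sum_primesLE_inv_le {N : ℕ} (hN : 2 ≤ N) :
    ∑ p ∈ N.primesLE, (p : ℝ)⁻¹ ≤ Real.log (Real.log N) + 3 - Real.log (Real.log 2) := by
  have hsum (g : ℕ → ℝ) (M : ℕ) :
      ∑ n ∈ Icc 2 M, (if n.Prime then g n else 0) = ∑ p ∈ M.primesLE, g p := by
    rw [← sum_filter, Nat.primesLE_eq_filter_Icc_two]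
  have h := sum_Icc_div_log_le (w := fun n => if n.Prime then Real.log n / n else 0)
    (c := Real.log 4) (fun M _ => (hsum _ M).trans_le (sum_primesLE_log_div_le M)) hN
  have h4 : Real.log 4 / Real.log 2 = 2 := by
    rw [show (4 : ℝ) = 2 ^ 2 by norm_num, Real.log_pow, Nat.cast_ofNat,
      mul_div_cancel_right₀ _ (Real.log_pos one_lt_two).ne']
  simp only [ite_div, zero_div, hsum, h4] at h
  convert h using 2 with p hp
  have : Real.log p ≠ 0 :=
    (Real.log_pos (by exact_mod_cast (Nat.prime_of_mem_primesLE hp).one_lt)).ne'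
  field_simp
  ring

theorem sum_primesLE_inv_sub_one_le {N : ℕ} (hN : 2 ≤ N) :
    ∑ p ∈ N.primesLE, ((p : ℝ) - 1)⁻¹ ≤ Real.log (Real.log N) + 4 - Real.log (Real.log 2) := by
  have hnonneg : ∀ n ∈ Icc 2 N, 0 ≤ ((n : ℝ) - 1)⁻¹ - (n : ℝ)⁻¹ := fun n hn => by
    have : (2 : ℝ) ≤ n := by exact_mod_cast (mem_Icc.1 hn).1
    exact sub_nonneg.2 (inv_anti₀ (by linarith) (by linarith))
  have htelescope : ∑ p ∈ N.primesLE, (((p : ℝ) - 1)⁻¹ - (p : ℝ)⁻¹) ≤ 1 := calc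
    _ ≤ ∑ n ∈ Icc 2 N, (((n : ℝ) - 1)⁻¹ - (n : ℝ)⁻¹) := by
        refine sum_le_sum_of_subset_of_nonneg ?_ fun n hn _ => hnonneg n hn
        rw [Nat.primesLE_eq_filter_Icc_two]
        exact filter_subset _ _
    _ = 1 - (N : ℝ)⁻¹ := by
        have := sum_Icc_sub (by omega : 2 ≤ N) fun n : ℕ => -((n : ℝ) - 1)⁻¹
        push_cast at this
        simp only [sub_neg_eq_add, neg_add_eq_sub, add_sub_cancel_right] at this
        rw [this]; norm_num
    _ ≤ 1 := by simp
  rw [sum_sub_distrib] at htelescope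
  linarith [sum_primesLE_inv_le hN]

namespace ArithmeticFunction

-- Set to `0` at `0`, since `0 ^ r = 1` for `r = 0`.
noncomputable def rpow (f : ArithmeticFunction ℝ) (r : ℝ) : ArithmeticFunction ℝ :=
  ⟨fun n => if n = 0 then 0 else f n ^ r, if_pos rfl⟩

theorem rpow_apply (f : ArithmeticFunction ℝ) (r : ℝ) {n : ℕ} (hn : n ≠ 0) :
    f.rpow r n = f n ^ r := if_neg hn

theorem IsMultiplicative.rpow {f : ArithmeticFunction ℝ} (hf : f.IsMultiplicative)
    (hf0 : ∀ n, 0 ≤ f n) (r : ℝ) : (f.rpow r).IsMultiplicative := by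
  refine IsMultiplicative.iff_ne_zero.2 ⟨?_, fun {m n} hm hn hmn => ?_⟩
  · rw [rpow_apply _ _ one_ne_zero, hf.map_one, one_rpow]
  · rw [rpow_apply _ _ (mul_ne_zero hm hn), rpow_apply _ _ hm, rpow_apply _ _ hn,
      hf.map_mul_of_coprime hmn, mul_rpow (hf0 m) (hf0 n)]

theorem IsMultiplicative.nonneg_of_prime_pow {f : ArithmeticFunction ℝ} (hf : f.IsMultiplicative)
    (h : ∀ p k, p.Prime → 0 ≤ f (p ^ k)) (n : ℕ) : 0 ≤ f n := by
  rcases eq_or_ne n 0 with rfl | hn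
  · simp
  rw [multiplicative_factorization f hf hn]
  exact prod_nonneg fun p hp => h p _ (Nat.prime_of_mem_primeFactors hp)

theorem sum_range_moebius_mul_apply_prime_pow {R : Type*} [Ring R] (g : ArithmeticFunction R)
    {p : ℕ} (hp : p.Prime) (k : ℕ) :
    ∑ i ∈ range (k + 1), ((μ : ArithmeticFunction R) * g) (p ^ i) = g (p ^ k) := by
  rw [← Nat.sum_divisors_prime_pow hp, ← coe_zeta_mul_apply, ← mul_assoc,
    coe_zeta_mul_coe_moebius, one_mul]

theorem moebius_mul_apply_prime_pow_succ {R : Type*} [Ring R] (g : ArithmeticFunction R)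
    {p : ℕ} (hp : p.Prime) (k : ℕ) :
    ((μ : ArithmeticFunction R) * g) (p ^ (k + 1)) = g (p ^ (k + 1)) - g (p ^ k) := by
  rw [← sum_range_moebius_mul_apply_prime_pow g hp, ← sum_range_moebius_mul_apply_prime_pow g hp,
    sum_range_succ _ (k + 1), add_sub_cancel_left]

theorem IsMultiplicative.sum_Icc_le_prod_primesLE {f : ArithmeticFunction ℝ}
    (hf : f.IsMultiplicative) (hf0 : ∀ n, 0 ≤ f n) {B : ℕ → ℝ} (hB : ∀ p, p.Prime → ∀ K, ∑ k ∈ range K, f (p ^ k) ≤ B p)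
    (N : ℕ) : ∑ n ∈ Icc 1 N, f n ≤ ∏ p ∈ N.primesLE, B p := by
  have hsum {p : ℕ} (hp : p.Prime) : Summable fun k => ‖f (p ^ k)‖ := by
    simp_rw [Real.norm_of_nonneg (hf0 _)]
    exact summable_of_sum_range_le (fun _ => hf0 _) (hB p hp)
  have hEuler := (EulerProduct.summable_and_hasSum_smoothNumbers_prod_primesBelow_tsum hf.map_one
    (fun h => hf.map_mul_of_coprime h) hsum (N + 1)).2
  calc ∑ n ∈ Icc 1 N, f n = ∑ n ∈ Icc 1 N, (N + 1).smoothNumbers.indicator f n :=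
        sum_congr rfl fun n hn => by
          obtain ⟨h1, hN⟩ := mem_Icc.1 hn
          exact (Set.indicator_of_mem (Nat.mem_smoothNumbers_of_lt h1 (Nat.lt_succ_of_le hN))
            _).symm
    _ ≤ ∏ p ∈ (N + 1).primesBelow, ∑' k, f (p ^ k) :=
        sum_le_hasSum _ (fun n _ => Set.indicator_nonneg (fun n _ => hf0 n) n)
          (hasSum_subtype_iff_indicator.1 hEuler)
    _ ≤ ∏ p ∈ N.primesLE, B p :=
        prod_le_prod (fun p _ => tsum_nonneg fun _ => hf0 _) fun p hp =>
          tsum_le_of_sum_range_le (fun _ => hf0 _) (hB p (Nat.prime_of_mem_primesBelow hp))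

noncomputable def abundancy : ArithmeticFunction ℝ := ⟨fun n => (σ 1 n : ℝ) / n, by simp⟩

theorem abundancy_apply (n : ℕ) : abundancy n = (σ 1 n : ℝ) / n := rfl

theorem abundancy_nonneg (n : ℕ) : 0 ≤ abundancy n := by rw [abundancy_apply]; positivity

theorem isMultiplicative_abundancy : abundancy.IsMultiplicative := by
  refine IsMultiplicative.iff_ne_zero.2 ⟨by simp [abundancy_apply], fun {m n} _ _ hmn => ?_⟩
  simp only [abundancy_apply, isMultiplicative_sigma.map_mul_of_coprime hmn, Nat.cast_mul,
    mul_div_mul_comm]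

theorem abundancy_prime_pow {p : ℕ} (hp : p.Prime) (k : ℕ) :
    abundancy (p ^ k) = ∑ i ∈ range (k + 1), (p : ℝ)⁻¹ ^ i := by
  have hp0 : (p : ℝ) ≠ 0 := by exact_mod_cast hp.ne_zero
  rw [abundancy_apply, sigma_one_apply_prime_pow hp, ← sum_range_reflect, Nat.cast_sum, sum_div]
  refine sum_congr rfl fun i hi => ?_
  obtain ⟨j, rfl⟩ : ∃ j, k = i + j := ⟨k - i, by have := mem_range.1 hi; omega⟩
  rw [show i + j + 1 - 1 - i = j by omega, Nat.cast_pow, Nat.cast_pow, pow_add,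
    div_mul_cancel_right₀ (pow_ne_zero _ hp0), inv_pow]

theorem abundancy_prime_pow_le_exp {p : ℕ} (hp : p.Prime) (k : ℕ) :
    abundancy (p ^ k) ≤ exp ((p - 1 : ℝ)⁻¹) := by
  have hp1 : (1 : ℝ) < p := by exact_mod_cast hp.one_lt
  have hinv : (p : ℝ)⁻¹ < 1 := inv_lt_one_of_one_lt₀ hp1
  calc abundancy (p ^ k) ≤ (p : ℝ)⁻¹ ^ 0 / (1 - (p : ℝ)⁻¹) := by
        rw [abundancy_prime_pow hp, ← Nat.Ico_zero_eq_range]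
        exact geom_sum_Ico_le_of_lt_one (by positivity) hinv
    _ = (p - 1 : ℝ)⁻¹ + 1 := by
        have : (p : ℝ) - 1 ≠ 0 := by linarith
        field_simp
        ring
    _ ≤ exp ((p - 1 : ℝ)⁻¹) := add_one_le_exp _

theorem abundancy_prime_pow_mono {p : ℕ} (hp : p.Prime) : Monotone fun k => abundancy (p ^ k) :=
  monotone_nat_of_le_succ fun k => by
    simp only [abundancy_prime_pow hp, sum_range_succ _ (k + 1)]
    exact le_add_of_nonneg_right (by positivity)

end ArithmeticFunction

theorem rho_eq_moebius_mul (r : ℝ) : rho r = ⇑((μ : ArithmeticFunction ℝ) * abundancy.rpow r) := by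
  funext d
  rw [mul_apply, Nat.sum_divisorsAntidiagonal'
    (f := fun a b => (μ : ArithmeticFunction ℝ) a * abundancy.rpow r b)]
  exact sum_congr rfl fun e he => by
    rw [rpow_apply _ _ (Nat.pos_of_mem_divisors he).ne', intCoe_apply, abundancy_apply]

theorem isMultiplicative_moebius_mul_abundancy_rpow (r : ℝ) :
    ((μ : ArithmeticFunction ℝ) * abundancy.rpow r).IsMultiplicative :=
  isMultiplicative_moebius.intCast.mul (isMultiplicative_abundancy.rpow abundancy_nonneg r)

section

variable {r : ℝ}

theorem moebius_mul_abundancy_rpow_prime_pow_nonneg (hr : 0 ≤ r) {p : ℕ} (hp : p.Prime) (k : ℕ) :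
    0 ≤ ((μ : ArithmeticFunction ℝ) * abundancy.rpow r) (p ^ k) := by
  cases k with
  | zero => simp [(isMultiplicative_moebius_mul_abundancy_rpow r).map_one]
  | succ k =>
    rw [moebius_mul_apply_prime_pow_succ _ hp, sub_nonneg,
      rpow_apply _ _ (pow_ne_zero _ hp.ne_zero), rpow_apply _ _ (pow_ne_zero _ hp.ne_zero)]
    exact rpow_le_rpow (abundancy_nonneg _) (abundancy_prime_pow_mono hp k.le_succ) hr

theorem moebius_mul_abundancy_rpow_nonneg (hr : 0 ≤ r) (n : ℕ) :
    0 ≤ ((μ : ArithmeticFunction ℝ) * abundancy.rpow r) n :=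
  (isMultiplicative_moebius_mul_abundancy_rpow r).nonneg_of_prime_pow
    (fun _ k hp => moebius_mul_abundancy_rpow_prime_pow_nonneg hr hp k) n

theorem sum_range_moebius_mul_abundancy_rpow_prime_pow_le (hr : 0 ≤ r) {p : ℕ} (hp : p.Prime)
    (K : ℕ) : ∑ k ∈ range K, ((μ : ArithmeticFunction ℝ) * abundancy.rpow r) (p ^ k)
      ≤ exp (r * (p - 1 : ℝ)⁻¹) := by
  cases K with
  | zero => simp [exp_nonneg]
  | succ K =>
    rw [sum_range_moebius_mul_apply_prime_pow _ hp, rpow_apply _ _ (pow_ne_zero _ hp.ne_zero),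
      mul_comm, exp_mul]
    exact rpow_le_rpow (abundancy_nonneg _) (abundancy_prime_pow_le_exp hp K) hr

end

theorem sum_rho_le_log_pow (r : ℝ) (hr : 1 ≤ r) :
    ∃ C : ℝ, ∀ x : ℝ, 2 ≤ x →
      (∑ d ∈ Finset.Icc 1 ⌊x⌋₊, rho r d) ≤ C * (Real.log x) ^ r := by
  have hr0 : 0 ≤ r := zero_le_one.trans hr
  refine ⟨exp (r * (4 - Real.log (Real.log 2))), fun x hx => ?_⟩
  have hN : 2 ≤ ⌊x⌋₊ := Nat.le_floor (by exact_mod_cast hx)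
  have hlogN : 0 < Real.log ⌊x⌋₊ := Real.log_pos (by exact_mod_cast hN)
  calc ∑ d ∈ Icc 1 ⌊x⌋₊, rho r d ≤ ∏ p ∈ (⌊x⌋₊).primesLE, exp (r * (p - 1 : ℝ)⁻¹) := by
        rw [rho_eq_moebius_mul]
        exact (isMultiplicative_moebius_mul_abundancy_rpow r).sum_Icc_le_prod_primesLE
          (moebius_mul_abundancy_rpow_nonneg hr0)
          (fun p hp => sum_range_moebius_mul_abundancy_rpow_prime_pow_le hr0 hp) _
    _ = exp (r * ∑ p ∈ (⌊x⌋₊).primesLE, (p - 1 : ℝ)⁻¹) := by rw [← exp_sum, mul_sum]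
    _ ≤ exp (r * (Real.log (Real.log ⌊x⌋₊) + (4 - Real.log (Real.log 2)))) := by
        gcongr
        linarith [sum_primesLE_inv_sub_one_le hN]
    _ = exp (r * (4 - Real.log (Real.log 2))) * Real.log ⌊x⌋₊ ^ r := by
        rw [rpow_def_of_pos hlogN, ← exp_add]
        ring_nf
    _ ≤ exp (r * (4 - Real.log (Real.log 2))) * Real.log x ^ r := by
        gcongr
        exact Nat.floor_le (by linarith)
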